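/- arXiv:2304.13003 — 2 statements merged into one kernel-verified Lean document; each statement's English description precedes it below -/
import Mathlib

section
/- Let {λ_k} be a strictly decreasing nonnegative summable sequence and suppose {a_{nk}}_{k≥1} are sequences with Σ_{k=1}^∞ a_{nk}² ≤ 1 for each n, and Σ_{k=1}^∞ a_{nk}² λ_k → λ₁ as n → ∞, where λ₁ > λ₂ > ⋯ ≥ 0. Then a_{n1}² → 1 and Σ_{k=2}^∞ a_{nk}² → 0 as n → ∞. -/
/-!
Put `w k = a_{nk}²`, a sub-probability weight. Bounding `λ_k ≤ λ₂` for `k ≥ 2` gives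
`Σ w_k λ_k ≤ w₁ λ₁ + λ₂ (1 - w₁)`, i.e. `(1 - w₁)(λ₁ - λ₂) ≤ λ₁ - Σ w_k λ_k`. The right-hand
side tends to `0` and `λ₁ - λ₂ > 0`, so `1 - a_{n1}² → 0`, and the tail `Σ_{k≥2} a_{nk}²`,
squeezed between `0` and `1 - a_{n1}²`, tends to `0` as well.
-/

open Filter Topology

section Weights

variable {w lam : ℕ → ℝ}

lemma tsum_succ_le_one_sub (hws : Summable w) (hw1 : ∑' k, w k ≤ 1) :
    ∑' k, w (k + 1) ≤ 1 - w 0 := by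
  have := hws.tsum_eq_zero_add
  linarith

lemma tsum_mul_le_of_antitone (hw : ∀ k, 0 ≤ w k) (hws : Summable w)
    (hlam : ∀ k, 0 ≤ lam k) (hanti : Antitone lam) :
    ∑' k, w k * lam k ≤ w 0 * lam 0 + lam 1 * ∑' k, w (k + 1) := by
  have hwlam : Summable fun k => w k * lam k :=
    .of_nonneg_of_le (fun k => mul_nonneg (hw k) (hlam k))
      (fun k => mul_le_mul_of_nonneg_left (hanti (Nat.zero_le k)) (hw k)) (hws.mul_right (lam 0))
  rw [hwlam.tsum_eq_zero_add, ← tsum_mul_left]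
  refine (add_le_add_iff_left (w 0 * lam 0)).2 ?_
  refine (hwlam.comp_injective (add_left_injective 1)).tsum_le_tsum (fun k => ?_)
    ((hws.comp_injective (add_left_injective 1)).mul_left (lam 1))
  rw [mul_comm (lam 1)]
  exact mul_le_mul_of_nonneg_left (hanti (Nat.le_add_left 1 k)) (hw (k + 1))

lemma one_sub_mul_sub_le_sub_tsum_mul (hw : ∀ k, 0 ≤ w k) (hws : Summable w)
    (hw1 : ∑' k, w k ≤ 1) (hlam : ∀ k, 0 ≤ lam k) (hanti : Antitone lam) :
    (1 - w 0) * (lam 0 - lam 1) ≤ lam 0 - ∑' k, w k * lam k := by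
  have hmass := tsum_succ_le_one_sub hws hw1
  have hmoment := tsum_mul_le_of_antitone hw hws hlam hanti
  nlinarith [hlam 1]

end Weights

/-- Indices are 0-based: `lam 0` is `λ₁`. -/
theorem stmt_5_general (lam : ℕ → ℝ) (hpos : ∀ k, 0 ≤ lam k) (hanti : StrictAnti lam)
    (a : ℕ → ℕ → ℝ)
    (hsq : ∀ n, Summable (fun k => (a n k) ^ 2))
    (hle : ∀ n, (∑' k, (a n k) ^ 2) ≤ 1)
    (hconv : Tendsto (fun n => ∑' k, (a n k) ^ 2 * lam k) atTop (nhds (lam 0))) :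
    Tendsto (fun n => (a n 0) ^ 2) atTop (nhds 1) ∧
      Tendsto (fun n => ∑' k, (a n (k + 1)) ^ 2) atTop (nhds 0) := by
  have hgap : 0 < lam 0 - lam 1 := sub_pos.2 (hanti zero_lt_one)
  have hw (n k : ℕ) : 0 ≤ a n k ^ 2 := sq_nonneg _
  have htail (n : ℕ) : 0 ≤ ∑' k, a n (k + 1) ^ 2 := tsum_nonneg fun k => hw n (k + 1)
  have hmass (n : ℕ) := tsum_succ_le_one_sub (hsq n) (hle n)
  have hdefect : Tendsto (fun n => 1 - a n 0 ^ 2) atTop (𝓝 0) := by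
    have hbound : Tendsto (fun n => (lam 0 - ∑' k, a n k ^ 2 * lam k) / (lam 0 - lam 1))
        atTop (𝓝 0) := by
      simpa using (hconv.const_sub (lam 0)).div_const (lam 0 - lam 1)
    refine squeeze_zero (fun n => ?_) (fun n => (le_div_iff₀ hgap).2 ?_) hbound
    · linarith [hmass n, htail n]
    · exact one_sub_mul_sub_le_sub_tsum_mul (hw n) (hsq n) (hle n) hpos hanti.antitone
  exact ⟨by simpa using hdefect.const_sub 1, squeeze_zero htail hmass hdefect⟩

/-- If `λ₁ > λ₂ > ⋯ ≥ 0` is summable, `Σ_k a_{nk}² ≤ 1` for each `n`, and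
`Σ_k a_{nk}² λ_k → λ₁`, then `a_{n1}² → 1` and `Σ_{k≥2} a_{nk}² → 0`.
(Indices are 0-based: `lam 0` is `λ₁`.) -/
theorem stmt_5 (lam : ℕ → ℝ) (hpos : ∀ k, 0 ≤ lam k) (hanti : StrictAnti lam)
    (hsum : Summable lam)
    (a : ℕ → ℕ → ℝ)
    (hsq : ∀ n, Summable (fun k => (a n k) ^ 2))
    (hle : ∀ n, (∑' k, (a n k) ^ 2) ≤ 1)
    (hconv : Tendsto (fun n => ∑' k, (a n k) ^ 2 * lam k) atTop (nhds (lam 0))) :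
    Tendsto (fun n => (a n 0) ^ 2) atTop (nhds 1) ∧
      Tendsto (fun n => ∑' k, (a n (k + 1)) ^ 2) atTop (nhds 0) :=
  stmt_5_general lam hpos hanti a hsq hle hconv
end

section
/- Let H be a Hilbert space, {f_n} a sequence in H with ‖f_n‖ ≤ 1, and φ ∈ H with ‖φ‖ = 1. Let V₀ be a self-adjoint nonneg. trace-class operator with simple largest eigenvalue λ₁ and eigenvector φ. If ⟨f_n, V₀ f_n⟩ → λ₁, then there exist signs S_n ∈ {−1,1} such that ‖S_n f_n − φ‖ → 0. -/
open Filter Topology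
open scoped RealInnerProductSpace

/-!
Writing `c_k = ⟪φ_k, f⟫`, one has `⟪f, V₀ f⟫ = Σ λ_k c_k² ≤ λ₂ ‖f‖² + (λ₁ - λ₂) c₁²`, so the
spectral gap `λ₁ > λ₂` forces `c₁² → 1` along the sequence. Choosing the sign `S` with
`S c₁ = |c₁|` then gives `‖S f - φ₁‖² ≤ 2 - 2 |c₁| → 0`.
-/

section

variable {E : Type*} [NormedAddCommGroup E] [InnerProductSpace ℝ E]

namespace Orthonormal

variable {ι : Type*} {v : ι → E}

theorem summable_mul_inner_smul [CompleteSpace E] (hv : Orthonormal ℝ v) {μ : ι → ℝ} {M : ℝ}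
    (hμ : ∀ i, ‖μ i‖ ≤ M) (g : E) : Summable fun i => (μ i * ⟪v i, g⟫) • v i := by
  have hsq : Summable fun i => ‖μ i * ⟪v i, g⟫‖ ^ 2 := by
    refine .of_nonneg_of_le (fun _ => by positivity) (fun i => ?_)
      ((hv.inner_products_summable g).mul_left (M ^ 2))
    rw [norm_mul, mul_pow]
    gcongr
    exact hμ i
  simpa using (hv.orthogonalFamily.summable_iff_norm_sq_summable _).mpr hsq

theorem hasSum_mul_inner_sq [CompleteSpace E] (hv : Orthonormal ℝ v) {μ : ι → ℝ} {M : ℝ}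
    (hμ : ∀ i, ‖μ i‖ ≤ M) (g : E) :
    HasSum (fun i => μ i * ⟪v i, g⟫ ^ 2) ⟪g, ∑' i, (μ i * ⟪v i, g⟫) • v i⟫ := by
  have h := (innerSL ℝ g).hasSum (hv.summable_mul_inner_smul hμ g).hasSum
  have hterm : (fun i => innerSL ℝ g ((μ i * ⟪v i, g⟫) • v i)) = fun i => μ i * ⟪v i, g⟫ ^ 2 := by
    ext i
    rw [innerSL_apply_apply, real_inner_smul_right, real_inner_comm]
    ring
  rwa [hterm] at h

theorem le_of_hasSum_mul_inner_sq {v : ℕ → E} (hv : Orthonormal ℝ v) {μ : ℕ → ℝ}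
    (hμ : Antitone μ) (hμ₁ : 0 ≤ μ 1) {g : E} {s : ℝ}
    (hs : HasSum (fun k => μ k * ⟪v k, g⟫ ^ 2) s) :
    s ≤ μ 1 * ‖g‖ ^ 2 + (μ 0 - μ 1) * ⟪v 0, g⟫ ^ 2 := by
  have hbessel : HasSum (fun k => ⟪v k, g⟫ ^ 2) (∑' k, ⟪v k, g⟫ ^ 2) := by
    simpa using (hv.inner_products_summable g).hasSum
  have hbessel_le : ∑' k, ⟪v k, g⟫ ^ 2 ≤ ‖g‖ ^ 2 := by
    simpa using hv.tsum_inner_products_le g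
  have hexcess : s - μ 1 * ∑' k, ⟪v k, g⟫ ^ 2 ≤ (μ 0 - μ 1) * ⟪v 0, g⟫ ^ 2 := by
    refine hasSum_le (fun k => ?_) (hs.sub (hbessel.mul_left (μ 1))) (hasSum_ite_eq 0 _)
    rcases k.eq_zero_or_pos with rfl | hk
    · simp only [if_pos]
      exact le_of_eq (by ring)
    · rw [if_neg hk.ne', ← sub_mul]
      exact mul_nonpos_of_nonpos_of_nonneg (sub_nonpos.2 (hμ hk)) (sq_nonneg _)
  nlinarith [mul_le_mul_of_nonneg_left hbessel_le hμ₁]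

end Orthonormal

theorem norm_smul_sub_sq_le_of_mul_inner_eq_abs {u x : E} (hu : ‖u‖ = 1) (hx : ‖x‖ ≤ 1) {s : ℝ}
    (hs : |s| = 1) (hsx : s * ⟪u, x⟫ = |⟪u, x⟫|) : ‖s • x - u‖ ^ 2 ≤ 2 - 2 * |⟪u, x⟫| := by
  rw [norm_sub_sq_real, norm_smul, real_inner_smul_left, real_inner_comm, hsx, Real.norm_eq_abs,
    hs, hu]
  nlinarith [norm_nonneg x]

theorem exists_sign_tendsto_of_inner_sq_tendsto_one {α : Type*} {l : Filter α} {u : E}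
    (hu : ‖u‖ = 1) {x : α → E} (hx : ∀ n, ‖x n‖ ≤ 1)
    (h : Tendsto (fun n => ⟪u, x n⟫ ^ 2) l (𝓝 1)) :
    ∃ S : α → ℝ, (∀ n, S n = 1 ∨ S n = -1) ∧ Tendsto (fun n => ‖S n • x n - u‖) l (𝓝 0) := by
  set S : α → ℝ := fun n => if 0 ≤ ⟪u, x n⟫ then 1 else -1
  refine ⟨S, fun n => by by_cases h : 0 ≤ ⟪u, x n⟫ <;> simp [S, h], ?_⟩
  have hbound : ∀ n, ‖S n • x n - u‖ ^ 2 ≤ 2 - 2 * |⟪u, x n⟫| := fun n => by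
    by_cases h : 0 ≤ ⟪u, x n⟫
    · exact norm_smul_sub_sq_le_of_mul_inner_eq_abs hu (hx n) (by simp [S, h])
        (by simp [S, h, abs_of_nonneg h])
    · exact norm_smul_sub_sq_le_of_mul_inner_eq_abs hu (hx n) (by simp [S, h])
        (by simp [S, h, abs_of_neg (not_le.1 h)])
  have habs : Tendsto (fun n => |⟪u, x n⟫|) l (𝓝 1) := by
    simpa [Real.sqrt_sq_eq_abs] using h.sqrt
  have hsq : Tendsto (fun n => ‖S n • x n - u‖ ^ 2) l (𝓝 0) :=
    squeeze_zero (fun _ => sq_nonneg _) hbound (by simpa using (habs.const_mul 2).const_sub 2)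
  simpa [Real.sqrt_sq (norm_nonneg _)] using hsq.sqrt

end

theorem stmt_15_general {H : Type*} [NormedAddCommGroup H] [InnerProductSpace ℝ H] [CompleteSpace H]
    (φ : ℕ → H) (hφ : Orthonormal ℝ φ)
    (lam : ℕ → ℝ) (hnn : ∀ k, 0 ≤ lam k) (hanti : StrictAnti lam)
    (V₀ : H →L[ℝ] H)
    (hV₀ : ∀ f : H, V₀ f = ∑' k, (lam k * (inner ℝ (φ k) f : ℝ)) • φ k)
    (f : ℕ → H) (hf : ∀ n, ‖f n‖ ≤ 1)
    (hconv : Tendsto (fun n => (inner ℝ (f n) (V₀ (f n)) : ℝ)) atTop (nhds (lam 0))) :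
    ∃ S : ℕ → ℝ, (∀ n, S n = 1 ∨ S n = -1) ∧
      Tendsto (fun n => ‖S n • f n - φ 0‖) atTop (nhds 0) := by
  have hgap : 0 < lam 0 - lam 1 := sub_pos.2 (hanti zero_lt_one)
  have hbdd : ∀ k, ‖lam k‖ ≤ lam 0 := fun k => by
    rw [Real.norm_of_nonneg (hnn k)]
    exact hanti.antitone k.zero_le
  have hrayleigh : ∀ n, ⟪f n, V₀ (f n)⟫ ≤ lam 1 + (lam 0 - lam 1) * ⟪φ 0, f n⟫ ^ 2 := by
    intro n
    have hs := hφ.hasSum_mul_inner_sq hbdd (f n)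
    rw [← hV₀] at hs
    have hfn : ‖f n‖ ^ 2 ≤ 1 := pow_le_one₀ (norm_nonneg _) (hf n)
    nlinarith [hφ.le_of_hasSum_mul_inner_sq hanti.antitone (hnn 1) hs, hnn 1]
  refine exists_sign_tendsto_of_inner_sq_tendsto_one (hφ.1 0) hf ?_
  have hlow : Tendsto (fun n => (⟪f n, V₀ (f n)⟫ - lam 1) / (lam 0 - lam 1)) atTop (𝓝 1) := by
    simpa [div_self hgap.ne'] using (hconv.sub_const (lam 1)).div_const (lam 0 - lam 1)
  refine tendsto_of_tendsto_of_tendsto_of_le_of_le hlow tendsto_const_nhds (fun n => ?_)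
    (fun n => ?_)
  · rw [div_le_iff₀ hgap]
    linarith [hrayleigh n]
  · have hcs := abs_real_inner_le_norm (φ 0) (f n)
    rw [hφ.1 0, one_mul] at hcs
    nlinarith [abs_nonneg ⟪φ 0, f n⟫, sq_abs ⟪φ 0, f n⟫, hf n]

/-- If `V₀ = Σ_k λ_k ⟨φ_k, ·⟩ φ_k` is a self-adjoint nonnegative trace-class operator with
simple largest eigenvalue `λ₁` (eigenvector `φ₁`), `‖f_n‖ ≤ 1`, and `⟨f_n, V₀ f_n⟩ → λ₁`,
then there are signs `S_n ∈ {−1,1}` with `‖S_n f_n − φ₁‖ → 0`.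
(0-based indices: `lam 0 = λ₁`, `φ 0 = φ₁`.) -/
theorem stmt_15 {H : Type*} [NormedAddCommGroup H] [InnerProductSpace ℝ H] [CompleteSpace H]
    (φ : ℕ → H) (hφ : Orthonormal ℝ φ)
    (lam : ℕ → ℝ) (hnn : ∀ k, 0 ≤ lam k) (hanti : StrictAnti lam) (hsum : Summable lam)
    (V₀ : H →L[ℝ] H)
    (hV₀ : ∀ f : H, V₀ f = ∑' k, (lam k * (inner ℝ (φ k) f : ℝ)) • φ k)
    (f : ℕ → H) (hf : ∀ n, ‖f n‖ ≤ 1)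
    (hconv : Tendsto (fun n => (inner ℝ (f n) (V₀ (f n)) : ℝ)) atTop (nhds (lam 0))) :
    ∃ S : ℕ → ℝ, (∀ n, S n = 1 ∨ S n = -1) ∧
      Tendsto (fun n => ‖S n • f n - φ 0‖) atTop (nhds 0) :=
  stmt_15_general φ hφ lam hnn hanti V₀ hV₀ f hf hconv
end
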